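/- Let F be a group and let R ≤ K be normal subgroups of F. Then the sequence of group homomorphisms induced by the inclusions, (R ∩ F')/⟨K(F) ∩ R⟩ → (K ∩ F')/⟨K(F) ∩ K⟩ → K/(⟨K(F) ∩ K⟩·R) → F/(R·F') → F/(K·F') → 1, is exact: the image of each map equals the kernel of the next, and the last map is surjective. -/

import Mathlib

open Subgroup

/-- `Kcl S = ⟨K(F) ∩ S⟩`: the subgroup of `F` generated by the commutators of `F`
that lie in `S`. -/
def Kcl {F : Type*} [Group F] (S : Subgroup F) : Subgroup F :=
  Subgroup.closure (commutatorSet F ∩ (S : Set F))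

instance Kcl_normal {F : Type*} [Group F] (S : Subgroup F) [hS : S.Normal] :
    (Kcl S).Normal := by
  constructor
  intro n hn g
  induction hn using Subgroup.closure_induction with
  | mem x hx =>
      obtain ⟨⟨a, b, hab⟩, hxS⟩ := hx
      apply Subgroup.subset_closure
      refine ⟨⟨g * a * g⁻¹, g * b * g⁻¹, ?_⟩, hS.conj_mem x hxS g⟩
      rw [← conjugate_commutatorElement, hab]
  | one => simpa using (Kcl S).one_mem
  | mul x y _ _ hx hy =>
      have h : g * (x * y) * g⁻¹ = (g * x * g⁻¹) * (g * y * g⁻¹) := by group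
      rw [h]; exact mul_mem hx hy
  | inv x _ hx =>
      have h : g * x⁻¹ * g⁻¹ = (g * x * g⁻¹)⁻¹ := by group
      rw [h]; exact inv_mem hx

theorem Kcl_le {F : Type*} [Group F] (S : Subgroup F) : Kcl S ≤ S :=
  (Subgroup.closure_le S).2 Set.inter_subset_right

theorem Kcl_le_commutator {F : Type*} [Group F] (S : Subgroup F) :
    Kcl S ≤ commutator F := by
  rw [commutator_eq_closure]
  exact Subgroup.closure_mono Set.inter_subset_left

theorem Kcl_mono {F : Type*} [Group F] {R K : Subgroup F} (h : R ≤ K) : Kcl R ≤ Kcl K :=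
  Subgroup.closure_mono (Set.inter_subset_inter_right _ h)

theorem subgroupOf_le_comap_inclusion {F : Type*} [Group F] {A B H₁ H₂ : Subgroup F}
    (hH : H₁ ≤ H₂) (hAB : A ≤ B) :
    A.subgroupOf H₁ ≤ (B.subgroupOf H₂).comap (Subgroup.inclusion hH) := by
  intro x hx
  rw [Subgroup.mem_comap, Subgroup.mem_subgroupOf, Subgroup.coe_inclusion]
  exact hAB (Subgroup.mem_subgroupOf.mp hx)

variable {F : Type*} [Group F]

/-- The map `(R ∩ F')/⟨K(F) ∩ R⟩ → (K ∩ F')/⟨K(F) ∩ K⟩` induced by the inclusion. -/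
def mapRK (R K : Subgroup F) [R.Normal] [K.Normal] (hRK : R ≤ K) :
    (↥(R ⊓ commutator F) ⧸ (Kcl R).subgroupOf (R ⊓ commutator F)) →*
      (↥(K ⊓ commutator F) ⧸ (Kcl K).subgroupOf (K ⊓ commutator F)) :=
  QuotientGroup.map _ _ (Subgroup.inclusion (inf_le_inf_right _ hRK))
    (subgroupOf_le_comap_inclusion _ (Kcl_mono hRK))

/-- The map `(K ∩ F')/⟨K(F) ∩ K⟩ → K/(⟨K(F) ∩ K⟩·R)` induced by the inclusion,
where the product `⟨K(F) ∩ K⟩·R` of normal subgroups is the join `Kcl K ⊔ R`. -/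
def mapKK (R K : Subgroup F) [R.Normal] [K.Normal] :
    (↥(K ⊓ commutator F) ⧸ (Kcl K).subgroupOf (K ⊓ commutator F)) →*
      (↥K ⧸ (Kcl K ⊔ R).subgroupOf K) :=
  QuotientGroup.map _ _ (Subgroup.inclusion inf_le_left)
    (subgroupOf_le_comap_inclusion _ le_sup_left)

/-- The map `K/(⟨K(F) ∩ K⟩·R) → F/(R·F')` induced by the inclusion `K ≤ F`,
where `R·F' = R ⊔ commutator F`. -/
def mapKF (R K : Subgroup F) [R.Normal] [K.Normal] :
    (↥K ⧸ (Kcl K ⊔ R).subgroupOf K) →* F ⧸ (R ⊔ commutator F) :=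
  QuotientGroup.map _ _ K.subtype
    (Subgroup.comap_mono (sup_le ((Kcl_le_commutator K).trans le_sup_right) le_sup_left))

/-- The map `F/(R·F') → F/(K·F')` induced by the identity of `F`. -/
def mapFF (R K : Subgroup F) [R.Normal] [K.Normal] (hRK : R ≤ K) :
    (F ⧸ (R ⊔ commutator F)) →* F ⧸ (K ⊔ commutator F) :=
  QuotientGroup.map _ _ (MonoidHom.id F)
    (by rw [Subgroup.comap_id]; exact sup_le_sup_right hRK _)

lemma mapKF_mk (R K : Subgroup F) [R.Normal] [K.Normal] (y : ↥K) :
    mapKF R K (QuotientGroup.mk y) = QuotientGroup.mk (y : F) := rfl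

lemma mem_sup_normal_right {G : Type*} [Group G] {H N : Subgroup G} [N.Normal] {x : G}
    (hx : x ∈ H ⊔ N) : ∃ h ∈ H, ∃ n ∈ N, h * n = x := by
  have : x ∈ ((H ⊔ N : Subgroup G) : Set G) := hx
  rw [Subgroup.mul_normal] at this
  exact Set.mem_mul.mp this

lemma mem_sup_normal_left {G : Type*} [Group G] {H N : Subgroup G} [H.Normal] {x : G}
    (hx : x ∈ H ⊔ N) : ∃ h ∈ H, ∃ n ∈ N, h * n = x := by
  have : x ∈ ((H ⊔ N : Subgroup G) : Set G) := hx
  rw [Subgroup.normal_mul] at this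
  exact Set.mem_mul.mp this

/-- for normal subgroups `R ≤ K` of `F`, the sequence
`(R ∩ F')/⟨K(F) ∩ R⟩ → (K ∩ F')/⟨K(F) ∩ K⟩ → K/(⟨K(F) ∩ K⟩·R) → F/(R·F') → F/(K·F') → 1`
of homomorphisms induced by the inclusions is exact. -/
theorem stmt7 (R K : Subgroup F) [R.Normal] [K.Normal] (hRK : R ≤ K) :
    (mapRK R K hRK).range = (mapKK R K).ker ∧
      (mapKK R K).range = (mapKF R K).ker ∧
      (mapKF R K).range = (mapFF R K hRK).ker ∧
      Function.Surjective (mapFF R K hRK) := by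
  refine ⟨?_, ?_, ?_, ?_⟩
  · ext q
    induction q using QuotientGroup.induction_on with
    | H x =>
      constructor
      · rintro ⟨p, hp⟩
        induction p using QuotientGroup.induction_on with
        | H y =>
          rw [MonoidHom.mem_ker, ← hp]
          show mapKK R K (mapRK R K hRK (QuotientGroup.mk y)) = 1
          rw [mapRK, mapKK, QuotientGroup.map_mk, QuotientGroup.map_mk,
            QuotientGroup.eq_one_iff, Subgroup.mem_subgroupOf]
          exact Subgroup.mem_sup_right (y.2.1 : (y : F) ∈ R)
      · intro hq
        rw [MonoidHom.mem_ker] at hq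
        rw [mapKK, QuotientGroup.map_mk, QuotientGroup.eq_one_iff,
          Subgroup.mem_subgroupOf] at hq
        change (x : F) ∈ Kcl K ⊔ R at hq
        obtain ⟨c, hc, r, hr, hcr⟩ := mem_sup_normal_right hq
        have hrF : r ∈ R ⊓ commutator F := by
          refine ⟨hr, ?_⟩
          have : r = c⁻¹ * (x : F) := by rw [← hcr]; group
          rw [this]
          exact Subgroup.mul_mem _ (Subgroup.inv_mem _ (Kcl_le_commutator K hc)) x.2.2
        refine ⟨QuotientGroup.mk ⟨r, hrF⟩, ?_⟩
        rw [mapRK, QuotientGroup.map_mk]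
        apply (QuotientGroup.eq (s := (Kcl K).subgroupOf (K ⊓ commutator F))).2
        rw [Subgroup.mem_subgroupOf]
        show ((Subgroup.inclusion _ ⟨r, hrF⟩ : ↥(K ⊓ commutator F)) : F)⁻¹ * (x : F) ∈ Kcl K
        have : ((Subgroup.inclusion (inf_le_inf_right (commutator F) hRK) ⟨r, hrF⟩ :
            ↥(K ⊓ commutator F)) : F) = r := rfl
        rw [this, ← hcr]
        have : r⁻¹ * (c * r) = r⁻¹ * c * r := by group
        rw [this]
        exact (Kcl_normal K).conj_mem' c hc r
  · ext q
    induction q using QuotientGroup.induction_on with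
    | H k =>
      constructor
      · rintro ⟨p, hp⟩
        induction p using QuotientGroup.induction_on with
        | H y =>
          rw [MonoidHom.mem_ker, ← hp]
          show mapKF R K (mapKK R K (QuotientGroup.mk y)) = 1
          rw [mapKK, QuotientGroup.map_mk, mapKF_mk,
            QuotientGroup.eq_one_iff]
          exact Subgroup.mem_sup_right (y.2.2 : (y : F) ∈ commutator F)
      · intro hq
        rw [MonoidHom.mem_ker, mapKF_mk, QuotientGroup.eq_one_iff] at hq
        change (k : F) ∈ R ⊔ commutator F at hq
        obtain ⟨r, hr, c, hc, hrc⟩ := mem_sup_normal_left hq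
        have hcK : c ∈ K ⊓ commutator F := by
          refine ⟨?_, hc⟩
          have : c = r⁻¹ * (k : F) := by rw [← hrc]; group
          rw [this]
          exact Subgroup.mul_mem _ (Subgroup.inv_mem _ (hRK hr)) k.2
        refine ⟨QuotientGroup.mk ⟨c, hcK⟩, ?_⟩
        rw [mapKK, QuotientGroup.map_mk]
        apply (QuotientGroup.eq (s := (Kcl K ⊔ R).subgroupOf K)).2
        rw [Subgroup.mem_subgroupOf]
        show c⁻¹ * (k : F) ∈ Kcl K ⊔ R
        rw [← hrc]
        have : c⁻¹ * (r * c) = c⁻¹ * r * c := by group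
        rw [this]
        exact Subgroup.mem_sup_right (Subgroup.Normal.conj_mem' ‹R.Normal› r hr c)
  · ext q
    induction q using QuotientGroup.induction_on with
    | H x =>
      constructor
      · rintro ⟨p, hp⟩
        induction p using QuotientGroup.induction_on with
        | H y =>
          rw [MonoidHom.mem_ker, ← hp]
          show mapFF R K hRK (mapKF R K (QuotientGroup.mk y)) = 1
          rw [mapKF_mk, mapFF, QuotientGroup.map_mk,
            QuotientGroup.eq_one_iff]
          exact Subgroup.mem_sup_left (y.2 : (y : F) ∈ K)
      · intro hq
        rw [MonoidHom.mem_ker, mapFF, QuotientGroup.map_mk, QuotientGroup.eq_one_iff] at hq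
        change x ∈ K ⊔ commutator F at hq
        obtain ⟨k, hk, c, hc, hkc⟩ := mem_sup_normal_right hq
        refine ⟨QuotientGroup.mk ⟨k, hk⟩, ?_⟩
        rw [mapKF_mk]
        apply (QuotientGroup.eq (s := R ⊔ commutator F)).2
        show k⁻¹ * x ∈ R ⊔ commutator F
        rw [← hkc]
        have : k⁻¹ * (k * c) = c := by group
        rw [this]
        exact Subgroup.mem_sup_right hc
  · intro q
    induction q using QuotientGroup.induction_on with
    | H x =>
      exact ⟨QuotientGroup.mk x, rfl⟩
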